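/- Under the abstract pricing framework defined in the context, consider the algorithm that uses the exact truncated series as one-step approximation: Ψ̃^{(M)}_i[Ξ](t;v) := Σ_{m=0}^{M−1} e^{−(v−t)}(v−t)^m/m!·Φ_{i,m}[Ξ](v−t;v), with the backward recursion Ψ̃^{(M,k)}_i[Ξ]((k−1)δ;T) := Ψ̃^{(M)}_i[Ξ]((k−1)δ;T) and Ψ̃^{(M,k)}_i[Ξ](nδ;T) := Ψ̃^{(M)}_i[Ξ̃^{(n)}](nδ;(n+1)δ) where Ξ̃^{(n)}(ℓ) := Ψ̃^{(M,k)}_ℓ[Ξ]((n+1)δ;T) and δ := T/k ≤ 1. Then for every payoff Ξ and every i ∈ {1,…,N}, |Ψ_i[Ξ](0;T) − Ψ̃^{(M,k)}_i[Ξ](0;T)| ≤ ‖Ξ‖∞·T^M/k^{M−1}. -/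

import Mathlib

open MeasureTheory Finset

lemma exp_tsum_aux (x : ℝ) : ∑' n : ℕ, x ^ n / (Nat.factorial n : ℝ) = Real.exp x := by
  rw [Real.exp_eq_exp_ℝ, NormedSpace.exp_eq_tsum_div]

lemma abs_tsum_le_aux {f g : ℕ → ℝ} (hfg : ∀ n, |f n| ≤ g n) (hg : Summable g) :
    |∑' n, f n| ≤ ∑' n, g n := by
  have habs : Summable fun n => |f n| :=
    Summable.of_nonneg_of_le (fun n => abs_nonneg _) hfg hg
  have habs' : Summable fun n => ‖f n‖ := by simpa only [Real.norm_eq_abs] using habs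
  have h1 : ‖∑' n, f n‖ ≤ ∑' n, ‖f n‖ := norm_tsum_le_tsum_norm habs'
  simp only [Real.norm_eq_abs] at h1
  exact h1.trans (Summable.tsum_le_tsum hfg habs hg)


/-- The Poisson-series price functional
`Ψ_i[Ξ](t;v) = Σ_{m=0}^∞ e^{−(v−t)} (v−t)^m/m! · Φ_{i,m}[Ξ](v−t;v)`. -/
noncomputable def Psi {N : ℕ} (Φ : Fin N → ℕ → (Fin N → ℝ) → ℝ → ℝ → ℝ)
    (i : Fin N) (Ξ : Fin N → ℝ) (t v : ℝ) : ℝ :=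
  ∑' m : ℕ, Real.exp (-(v - t)) * (v - t) ^ m / (Nat.factorial m : ℝ) * Φ i m Ξ (v - t) v

/-- The one-step approximation `Ψ̃^{(M,r)}_i[Ξ](t;v)`, using the exact coefficients
`Φ_{i,m}` for `m < r` and the approximate coefficients `Φ̃_{i,m}` for `r ≤ m < M`. -/
noncomputable def PsiStep {N : ℕ} (M r : ℕ)
    (Φ Φt : Fin N → ℕ → (Fin N → ℝ) → ℝ → ℝ → ℝ)
    (i : Fin N) (Ξ : Fin N → ℝ) (t v : ℝ) : ℝ :=
  (∑ m ∈ Finset.range r,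
      Real.exp (-(v - t)) * (v - t) ^ m / (Nat.factorial m : ℝ) * Φ i m Ξ (v - t) v)
  + ∑ m ∈ Finset.Ico r M,
      Real.exp (-(v - t)) * (v - t) ^ m / (Nat.factorial m : ℝ) * Φt i m Ξ (v - t) v

/-- The backward algorithm iterates: with `δ := T/k`, `PsiIter M r k T Φ Φt Ξ j i` is the
approximation `Ψ̃^{(M,r,k)}_i[Ξ](nδ;T)` at time `nδ` for `n = k - 1 - j`; in particular
`j = 0` gives the first step `Ψ̃^{(M,r)}_i[Ξ]((k−1)δ;T)` and `j = k - 1` gives the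
approximation at time `0`. -/
noncomputable def PsiIter {N : ℕ} (M r k : ℕ) (T : ℝ)
    (Φ Φt : Fin N → ℕ → (Fin N → ℝ) → ℝ → ℝ → ℝ)
    (Ξ : Fin N → ℝ) : ℕ → Fin N → ℝ
  | 0 => fun i => PsiStep M r Φ Φt i Ξ (((k - 1 : ℕ) : ℝ) * (T / k)) T
  | j + 1 => fun i => PsiStep M r Φ Φt i (PsiIter M r k T Φ Φt Ξ j)
      (((k - 1 - (j + 1) : ℕ) : ℝ) * (T / k)) (((k - 1 - j : ℕ) : ℝ) * (T / k))


/-- **Error bound for the algorithm with exact truncated series.** Taking the one-step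
approximation to be the exact truncation `Ψ̃^{(M)}_i[Ξ](t;v) = Σ_{m<M} e^{−(v−t)}(v−t)^m/m!·
Φ_{i,m}[Ξ](v−t;v)` (i.e. `r = M`, no approximate coefficients; this is `PsiStep M M Φ Φ` and
the backward recursion `PsiIter M M k T Φ Φ`), with `δ := T/k ≤ 1`, one has
`|Ψ_i[Ξ](0;T) − Ψ̃^{(M,k)}_i[Ξ](0;T)| ≤ ‖Ξ‖∞ · T^M / k^{M−1}`. -/
theorem poisson_algorithm_error_exact_truncation
    {N : ℕ} (hN : 0 < N) (T : ℝ) (hT : 0 < T)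
    (Φ : Fin N → ℕ → (Fin N → ℝ) → ℝ → ℝ → ℝ)
    (hΦlin : ∀ (i : Fin N) (m : ℕ) (ζ v : ℝ), 0 ≤ ζ → ζ ≤ v → v ≤ T →
      IsLinearMap ℝ fun Ξ : Fin N → ℝ => Φ i m Ξ ζ v)
    (hΦone : ∀ (i : Fin N) (m : ℕ) (ζ v : ℝ), 0 ≤ ζ → ζ ≤ v → v ≤ T →
      Φ i m (fun _ => 1) ζ v ∈ Set.Icc (0 : ℝ) 1)
    (hΦbd : ∀ (i : Fin N) (m : ℕ) (Ξ : Fin N → ℝ) (ζ v : ℝ), 0 ≤ ζ → ζ ≤ v → v ≤ T →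
      |Φ i m Ξ ζ v| ≤ ‖Ξ‖ * Φ i m (fun _ => 1) ζ v)
    (hsemi : ∀ (i : Fin N) (Ξ : Fin N → ℝ) (t s v : ℝ), 0 ≤ t → t ≤ s → s ≤ v → v ≤ T →
      Psi Φ i Ξ t v = Psi Φ i (fun ℓ => Psi Φ ℓ Ξ s v) t s)
    (M : ℕ) (hM : 1 ≤ M)
    (Ξ : Fin N → ℝ) (k : ℕ) (hk : 0 < k) (hδ : T / k ≤ 1) (i : Fin N) :
    |Psi Φ i Ξ 0 T - PsiIter M M k T Φ Φ Ξ (k - 1) i|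
      ≤ ‖Ξ‖ * T ^ M / (k : ℝ) ^ (M - 1) := by
  have hkR : (0 : ℝ) < (k : ℝ) := by exact_mod_cast hk
  set δ : ℝ := T / k with hδdef
  have hδ0 : 0 < δ := div_pos hT hkR
  have hkδ : (k : ℝ) * δ = T := by rw [hδdef]; field_simp [hkR.ne']
  -- pointwise bound on Φ
  have hbd' : ∀ (i : Fin N) (m : ℕ) (Ξ' : Fin N → ℝ) (ζ v : ℝ), 0 ≤ ζ → ζ ≤ v → v ≤ T →
      |Φ i m Ξ' ζ v| ≤ ‖Ξ'‖ := by
    intro i m Ξ' ζ v h1 h2 h3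
    refine (hΦbd i m Ξ' ζ v h1 h2 h3).trans ?_
    exact mul_le_of_le_one_right (norm_nonneg _) (hΦone i m ζ v h1 h2 h3).2
  -- nonnegativity of weights
  have hw : ∀ (ζ : ℝ) (m : ℕ), 0 ≤ ζ → 0 ≤ Real.exp (-ζ) * ζ ^ m / (Nat.factorial m : ℝ) :=
    fun ζ m hζ => div_nonneg (mul_nonneg (Real.exp_pos _).le (pow_nonneg hζ m))
      (Nat.cast_nonneg _)
  -- summability of the dominating series
  have hgsum : ∀ (c ζ : ℝ), Summable fun m : ℕ => c * (ζ ^ m / (Nat.factorial m : ℝ)) :=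
    fun c ζ => (Real.summable_pow_div_factorial ζ).mul_left c
  have hgtsum : ∀ (c ζ : ℝ), ∑' m : ℕ, c * (ζ ^ m / (Nat.factorial m : ℝ)) = c * Real.exp ζ := by
    intro c ζ
    rw [tsum_mul_left, exp_tsum_aux]
  -- term bound
  have hterm : ∀ (i : Fin N) (m : ℕ) (Ξ' : Fin N → ℝ) (t v : ℝ), 0 ≤ t → t ≤ v → v ≤ T →
      |Real.exp (-(v - t)) * (v - t) ^ m / (Nat.factorial m : ℝ) * Φ i m Ξ' (v - t) v|
        ≤ Real.exp (-(v - t)) * ‖Ξ'‖ * ((v - t) ^ m / (Nat.factorial m : ℝ)) := by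
    intro i m Ξ' t v h1 h2 h3
    have hζ : 0 ≤ v - t := sub_nonneg.2 h2
    rw [abs_mul, abs_of_nonneg (hw _ m hζ)]
    calc Real.exp (-(v - t)) * (v - t) ^ m / (Nat.factorial m : ℝ) * |Φ i m Ξ' (v - t) v|
        ≤ Real.exp (-(v - t)) * (v - t) ^ m / (Nat.factorial m : ℝ) * ‖Ξ'‖ :=
          mul_le_mul_of_nonneg_left (hbd' i m Ξ' (v - t) v hζ (le_trans h1 h2 |>.trans le_rfl |> fun _ => by linarith) h3) (hw _ m hζ)
      _ = Real.exp (-(v - t)) * ‖Ξ'‖ * ((v - t) ^ m / (Nat.factorial m : ℝ)) := by ring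
  -- summability of the Psi series
  have hsum : ∀ (i : Fin N) (Ξ' : Fin N → ℝ) (t v : ℝ), 0 ≤ t → t ≤ v → v ≤ T →
      Summable fun m : ℕ =>
        Real.exp (-(v - t)) * (v - t) ^ m / (Nat.factorial m : ℝ) * Φ i m Ξ' (v - t) v := by
    intro i Ξ' t v h1 h2 h3
    refine Summable.of_abs (Summable.of_nonneg_of_le (fun m => abs_nonneg _)
      (fun m => hterm i m Ξ' t v h1 h2 h3) ?_)
    exact hgsum _ _
  -- bound on Psi
  have hPsibd : ∀ (i : Fin N) (Ξ' : Fin N → ℝ) (t v : ℝ), 0 ≤ t → t ≤ v → v ≤ T →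
      |Psi Φ i Ξ' t v| ≤ ‖Ξ'‖ := by
    intro i Ξ' t v h1 h2 h3
    have := abs_tsum_le_aux (fun m => hterm i m Ξ' t v h1 h2 h3) (hgsum _ _)
    rw [hgtsum] at this
    refine (le_trans this ?_)
    rw [mul_comm (Real.exp _) ‖Ξ'‖, mul_assoc, ← Real.exp_add]
    simp
  -- one-step error
  have honestep : ∀ (i : Fin N) (Ξ' : Fin N → ℝ) (t v : ℝ), 0 ≤ t → t ≤ v → v ≤ T →
      v - t ≤ 1 →
      |Psi Φ i Ξ' t v - PsiStep M M Φ Φ i Ξ' t v| ≤ ‖Ξ'‖ * (v - t) ^ M := by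
    intro i Ξ' t v h1 h2 h3 h4
    have hζ : 0 ≤ v - t := sub_nonneg.2 h2
    have hsm := hsum i Ξ' t v h1 h2 h3
    have htail := Summable.sum_add_tsum_nat_add M hsm
    have hdiff : Psi Φ i Ξ' t v - PsiStep M M Φ Φ i Ξ' t v
        = ∑' m : ℕ, Real.exp (-(v - t)) * (v - t) ^ (m + M) / (Nat.factorial (m + M) : ℝ)
            * Φ i (m + M) Ξ' (v - t) v := by
      rw [PsiStep, Finset.Ico_self, Finset.sum_empty, add_zero, Psi, ← htail]
      ring
    rw [hdiff]
    have hb : ∀ m : ℕ,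
        |Real.exp (-(v - t)) * (v - t) ^ (m + M) / (Nat.factorial (m + M) : ℝ)
            * Φ i (m + M) Ξ' (v - t) v|
        ≤ Real.exp (-(v - t)) * ‖Ξ'‖ * (v - t) ^ M * ((v - t) ^ m / (Nat.factorial m : ℝ)) := by
      intro m
      refine (hterm i (m + M) Ξ' t v h1 h2 h3).trans ?_
      have hfac : (Nat.factorial m : ℝ) ≤ (Nat.factorial (m + M) : ℝ) := by
        exact_mod_cast Nat.factorial_le (Nat.le_add_right m M)
      have hfacpos : (0 : ℝ) < Nat.factorial m := by exact_mod_cast Nat.factorial_pos m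
      have hdd : (v - t) ^ (m + M) / (Nat.factorial (m + M) : ℝ)
          ≤ (v - t) ^ (m + M) / (Nat.factorial m : ℝ) :=
        div_le_div_of_nonneg_left (pow_nonneg hζ _) hfacpos hfac
      calc Real.exp (-(v - t)) * ‖Ξ'‖ * ((v - t) ^ (m + M) / (Nat.factorial (m + M) : ℝ))
          ≤ Real.exp (-(v - t)) * ‖Ξ'‖ * ((v - t) ^ (m + M) / (Nat.factorial m : ℝ)) := by
            exact mul_le_mul_of_nonneg_left hdd (mul_nonneg (Real.exp_pos _).le (norm_nonneg _))
        _ = Real.exp (-(v - t)) * ‖Ξ'‖ * (v - t) ^ M * ((v - t) ^ m / (Nat.factorial m : ℝ)) := by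
            rw [pow_add]; ring
    refine (abs_tsum_le_aux hb (hgsum _ _)).trans ?_
    rw [hgtsum]
    have : Real.exp (-(v - t)) * ‖Ξ'‖ * (v - t) ^ M * Real.exp (v - t)
        = ‖Ξ'‖ * (v - t) ^ M * (Real.exp (-(v - t)) * Real.exp (v - t)) := by ring
    rw [this, ← Real.exp_add]
    simp
  -- PsiStep difference bound (stability)
  have hstepdiff : ∀ (i : Fin N) (Ξ₁ Ξ₂ : Fin N → ℝ) (t v : ℝ), 0 ≤ t → t ≤ v → v ≤ T →
      |PsiStep M M Φ Φ i Ξ₁ t v - PsiStep M M Φ Φ i Ξ₂ t v| ≤ ‖Ξ₁ - Ξ₂‖ := by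
    intro i Ξ₁ Ξ₂ t v h1 h2 h3
    have hζ : 0 ≤ v - t := sub_nonneg.2 h2
    have hdiff : PsiStep M M Φ Φ i Ξ₁ t v - PsiStep M M Φ Φ i Ξ₂ t v
        = ∑ m ∈ Finset.range M,
            Real.exp (-(v - t)) * (v - t) ^ m / (Nat.factorial m : ℝ)
              * Φ i m (Ξ₁ - Ξ₂) (v - t) v := by
      simp only [PsiStep, Finset.Ico_self, Finset.sum_empty, add_zero, ← Finset.sum_sub_distrib]
      refine Finset.sum_congr rfl fun m _ => ?_
      rw [(hΦlin i m (v - t) v hζ (by linarith) h3).map_sub]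
      ring
    rw [hdiff]
    calc |∑ m ∈ Finset.range M, Real.exp (-(v - t)) * (v - t) ^ m / (Nat.factorial m : ℝ)
            * Φ i m (Ξ₁ - Ξ₂) (v - t) v|
        ≤ ∑ m ∈ Finset.range M, |Real.exp (-(v - t)) * (v - t) ^ m / (Nat.factorial m : ℝ)
            * Φ i m (Ξ₁ - Ξ₂) (v - t) v| := Finset.abs_sum_le_sum_abs _ _
      _ ≤ ∑ m ∈ Finset.range M,
            Real.exp (-(v - t)) * ‖Ξ₁ - Ξ₂‖ * ((v - t) ^ m / (Nat.factorial m : ℝ)) :=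
          Finset.sum_le_sum fun m _ => hterm i m (Ξ₁ - Ξ₂) t v h1 h2 h3
      _ = Real.exp (-(v - t)) * ‖Ξ₁ - Ξ₂‖ * ∑ m ∈ Finset.range M,
            (v - t) ^ m / (Nat.factorial m : ℝ) := by rw [Finset.mul_sum]
      _ ≤ Real.exp (-(v - t)) * ‖Ξ₁ - Ξ₂‖ * Real.exp (v - t) := by
          refine mul_le_mul_of_nonneg_left (Real.sum_le_exp_of_nonneg hζ M)
            (mul_nonneg (Real.exp_pos _).le (norm_nonneg _))
      _ = ‖Ξ₁ - Ξ₂‖ * (Real.exp (-(v - t)) * Real.exp (v - t)) := by ring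
      _ = ‖Ξ₁ - Ξ₂‖ := by rw [← Real.exp_add]; simp
  -- main induction
  have key : ∀ j : ℕ, j ≤ k - 1 → ∀ i : Fin N,
      |Psi Φ i Ξ (((k - 1 - j : ℕ) : ℝ) * δ) T - PsiIter M M k T Φ Φ Ξ j i|
        ≤ ((j : ℝ) + 1) * (‖Ξ‖ * δ ^ M) := by
    intro j
    induction j with
    | zero =>
      intro _ i
      have hk1 : ((k - 1 : ℕ) : ℝ) = (k : ℝ) - 1 := by
        push_cast [Nat.cast_sub hk]; ring
      have ht0 : (0 : ℝ) ≤ ((k - 1 : ℕ) : ℝ) * δ := by positivity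
      have htT : ((k - 1 : ℕ) : ℝ) * δ ≤ T := by
        rw [hk1, ← hkδ]; nlinarith
      have hζδ : T - ((k - 1 : ℕ) : ℝ) * δ = δ := by
        rw [hk1, ← hkδ]; ring
      simp only [Nat.sub_zero, PsiIter]
      have := honestep i Ξ (((k - 1 : ℕ) : ℝ) * δ) T ht0 htT le_rfl (by rw [hζδ]; exact hδ)
      rw [hζδ] at this
      simpa using this
    | succ j ih =>
      intro hj1 i
      have hjk : j ≤ k - 1 := Nat.le_of_succ_le hj1
      -- n := k - 1 - (j+1), and k - 1 - j = n + 1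
      have hsucc : k - 1 - j = (k - 1 - (j + 1)) + 1 := by omega
      set n : ℕ := k - 1 - (j + 1) with hn
      have ht0 : (0 : ℝ) ≤ (n : ℝ) * δ := by positivity
      have hts : (n : ℝ) * δ ≤ ((n + 1 : ℕ) : ℝ) * δ := by
        push_cast; nlinarith
      have hsT : ((n + 1 : ℕ) : ℝ) * δ ≤ T := by
        have hn1k : (n + 1 : ℕ) ≤ k := by omega
        have : ((n + 1 : ℕ) : ℝ) ≤ (k : ℝ) := by exact_mod_cast hn1k
        rw [← hkδ]; nlinarith
      have hζδ : ((n + 1 : ℕ) : ℝ) * δ - (n : ℝ) * δ = δ := by push_cast; ring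
      -- abbreviations
      set s : ℝ := ((n + 1 : ℕ) : ℝ) * δ with hs
      set t : ℝ := (n : ℝ) * δ with ht
      set Ξh : Fin N → ℝ := fun ℓ => Psi Φ ℓ Ξ s T with hΞh
      have hsemieq : Psi Φ i Ξ t T = Psi Φ i Ξh t s :=
        hsemi i Ξ t s T ht0 hts hsT le_rfl
      have hItereq : PsiIter M M k T Φ Φ Ξ (j + 1) i
          = PsiStep M M Φ Φ i (PsiIter M M k T Φ Φ Ξ j) t s := by
        simp only [PsiIter, hsucc, ← hn, hs, ht, ← hδdef]
      have hΞhbd : ‖Ξh‖ ≤ ‖Ξ‖ := by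
        have : Nonempty (Fin N) := ⟨⟨0, hN⟩⟩
        refine (pi_norm_le_iff_of_nonneg (norm_nonneg _)).2 fun ℓ => ?_
        rw [Real.norm_eq_abs]
        exact hPsibd ℓ Ξ s T (le_trans ht0 hts) hsT le_rfl
      have hdist : ‖Ξh - PsiIter M M k T Φ Φ Ξ j‖ ≤ ((j : ℝ) + 1) * (‖Ξ‖ * δ ^ M) := by
        have : Nonempty (Fin N) := ⟨⟨0, hN⟩⟩
        refine (pi_norm_le_iff_of_nonneg (by positivity)).2 fun ℓ => ?_
        have := ih hjk ℓ
        rw [hsucc] at this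
        simpa [Real.norm_eq_abs, hΞh, hs] using this
      have hsT' : s ≤ T := hsT
      have e1 := honestep i Ξh t s ht0 hts (hsT') (by rw [hζδ]; exact hδ)
      have e2 := hstepdiff i Ξh (PsiIter M M k T Φ Φ Ξ j) t s ht0 hts hsT'
      calc |Psi Φ i Ξ t T - PsiIter M M k T Φ Φ Ξ (j + 1) i|
          = |(Psi Φ i Ξh t s - PsiStep M M Φ Φ i Ξh t s)
              + (PsiStep M M Φ Φ i Ξh t s
                - PsiStep M M Φ Φ i (PsiIter M M k T Φ Φ Ξ j) t s)| := by
            rw [hsemieq, hItereq]; ring_nf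
        _ ≤ |Psi Φ i Ξh t s - PsiStep M M Φ Φ i Ξh t s|
              + |PsiStep M M Φ Φ i Ξh t s
                - PsiStep M M Φ Φ i (PsiIter M M k T Φ Φ Ξ j) t s| := abs_add_le _ _
        _ ≤ ‖Ξh‖ * (s - t) ^ M + ((j : ℝ) + 1) * (‖Ξ‖ * δ ^ M) :=
            add_le_add e1 (e2.trans hdist)
        _ ≤ ‖Ξ‖ * δ ^ M + ((j : ℝ) + 1) * (‖Ξ‖ * δ ^ M) := by
            rw [hζδ]
            exact add_le_add_left
              (mul_le_mul_of_nonneg_right hΞhbd (pow_nonneg hδ0.le M)) _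
        _ = (((j + 1 : ℕ) : ℝ) + 1) * (‖Ξ‖ * δ ^ M) := by push_cast; ring
  -- conclude
  have hfin := key (k - 1) le_rfl i
  have h00 : k - 1 - (k - 1) = 0 := Nat.sub_self _
  rw [h00] at hfin
  simp only [Nat.cast_zero, zero_mul] at hfin
  refine hfin.trans ?_
  have hk1 : ((k - 1 : ℕ) : ℝ) + 1 = (k : ℝ) := by
    push_cast [Nat.cast_sub hk]; ring
  rw [hk1]
  have hM' : M = (M - 1) + 1 := (Nat.succ_pred_eq_of_pos hM).symm
  have hkM : (k : ℝ) ^ M = (k : ℝ) ^ (M - 1) * k := by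
    conv_lhs => rw [hM']
    rw [pow_succ]
  have : (k : ℝ) * (‖Ξ‖ * δ ^ M) = ‖Ξ‖ * T ^ M / (k : ℝ) ^ (M - 1) := by
    rw [hδdef, div_pow, hkM]
    field_simp
  rw [this]
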